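/- arXiv:1407.0160 — 13 statements merged into one kernel-verified Lean document; each statement's English description precedes it below -/
import Mathlib

section
/- For every regular language L over an alphabet Σ, the third iterate of the distinguishability operation equals the second iterate: D(D(D(L))) = D(D(L)). -/
variable {α : Type*}

/-- The left quotient of a language `L` by a word `w`: `w⁻¹L = {x | w ++ x ∈ L}`. -/
def leftQuot (w : List α) (L : Set (List α)) : Set (List α) := {x | w ++ x ∈ L}

/-- The distinguishability language `D(L)`. -/
def dist (L : Set (List α)) : Set (List α) := {w | ∃ x y : List α, x ++ w ∈ L ∧ y ++ w ∉ L}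

/-- The set of all suffixes of words of `L`. -/
def suffixes (L : Set (List α)) : Set (List α) := {v | ∃ u : List α, u ++ v ∈ L}

lemma dist_suffix {L : Set (List α)} {u v : List α} (h : u ++ v ∈ dist L) : v ∈ dist L := by
  obtain ⟨x, y, hx, hy⟩ := h
  exact ⟨x ++ u, y ++ u, by simpa [List.append_assoc] using hx,
    by simpa [List.append_assoc] using hy⟩

theorem stmt_5 (L : Set (List α)) (hL : Language.IsRegular L) :
    dist (dist (dist L)) = dist (dist L) := by
  ext w
  constructor
  · rintro ⟨x, y, hx, -⟩
    exact dist_suffix hx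
  · intro hw
    obtain ⟨a, b, ha, hb⟩ := hw
    refine ⟨[], b, by simpa using ⟨a, b, ha, hb⟩, ?_⟩
    rintro ⟨x', y', hx', -⟩
    exact hb (dist_suffix hx')
end

section
/- Let L be a regular language over an alphabet Σ. If L has the empty set as a left quotient, i.e., there exists z ∈ Σ* with z⁻¹L = ∅, then D(L) = suff(L). -/
variable {α : Type*}

theorem stmt_6 (L : Set (List α)) (hL : Language.IsRegular L)
    (z : List α) (hz : leftQuot z L = ∅) :
    dist L = suffixes L := by
  ext w
  constructor
  · rintro ⟨x, y, hx, -⟩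
    exact ⟨x, hx⟩
  · rintro ⟨u, hu⟩
    refine ⟨u, z, hu, fun h => ?_⟩
    have : w ∈ leftQuot z L := h
    rw [hz] at this
    exact this
end

section
/- Let L be a regular language over an alphabet Σ. If L is suffix closed and L has the empty set as a left quotient (there exists z ∈ Σ* with z⁻¹L = ∅), then L is a fixed point of the distinguishability operation: D(L) = L. -/
variable {α : Type*}

theorem stmt_7 (L : Set (List α)) (hL : Language.IsRegular L)
    (hsc : ∀ w ∈ L, ∀ x y : List α, w = x ++ y → y ∈ L)
    (z : List α) (hz : leftQuot z L = ∅) :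
    dist L = L := by
  ext w
  constructor
  · rintro ⟨x, y, hx, -⟩
    exact hsc _ hx x w rfl
  · intro hw
    refine ⟨[], z, by simpa using hw, fun h => ?_⟩
    have : w ∈ leftQuot z L := h
    simp [hz] at this
end

section
/- Let L be a regular language over an alphabet Σ. If D(L) has the empty set as a left quotient, i.e., there exists z ∈ Σ* with z⁻¹(D(L)) = ∅, then D(D(L)) = D(L). -/
variable {α : Type*}

theorem stmt_8 (L : Set (List α)) (hL : Language.IsRegular L)
    (z : List α) (hz : leftQuot z (dist L) = ∅) :
    dist (dist L) = dist L := by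
  ext w
  constructor
  · rintro ⟨x, y, ⟨a, b, ha, hb⟩, -⟩
    exact ⟨a ++ x, b ++ x, by simpa [List.append_assoc] using ha,
      by simpa [List.append_assoc] using hb⟩
  · intro hw
    refine ⟨[], z, by simpa using hw, fun hzw => ?_⟩
    have : w ∈ leftQuot z (dist L) := hzw
    simp [hz] at this
end

section
/- Let L be a regular language over an alphabet Σ. If D(L) = L, then L has the empty set as a left quotient, i.e., there exists z ∈ Σ* with z⁻¹L = ∅. -/
variable {α : Type*}

theorem stmt_9 (L : Set (List α)) (hL : Language.IsRegular L)
    (hfix : dist L = L) :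
    ∃ z : List α, leftQuot z L = ∅ := by
  by_contra hcon
  push_neg at hcon
  -- L is suffix-closed
  have hsuffix : ∀ u v : List α, u ++ v ∈ L → v ∈ L := by
    intro u v huv
    rw [← hfix] at huv ⊢
    obtain ⟨x, y, hx, hy⟩ := huv
    exact ⟨x ++ u, y ++ u, by rwa [List.append_assoc], by rwa [List.append_assoc]⟩
  -- step: for each z, there is y with strictly smaller quotient of y ++ z
  have step : ∀ z : List α, ∃ y : List α, leftQuot (y ++ z) L ⊂ leftQuot z L := by
    intro z
    obtain ⟨w, hw⟩ := hcon z
    have hzw : z ++ w ∈ L := hw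
    rw [← hfix] at hzw
    obtain ⟨x, y, -, hy⟩ := hzw
    refine ⟨y, ?_, ?_⟩
    · intro v hv
      exact hsuffix y (z ++ v) (by rwa [← List.append_assoc])
    · intro hsub
      exact hy (by rw [← List.append_assoc]; exact hsub hw)
  choose f hf using step
  -- iterate to get a strictly decreasing sequence of quotients
  set g : List α → List α := fun z => f z ++ z with hg
  set zs : ℕ → List α := fun n => g^[n] [] with hzs
  have hstep : ∀ n, leftQuot (zs (n + 1)) L ⊂ leftQuot (zs n) L := by
    intro n
    have : zs (n + 1) = g (zs n) := Function.iterate_succ_apply' g n []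
    rw [this]
    exact hf (zs n)
  have hanti : StrictAnti (fun n => leftQuot (zs n) L) :=
    strictAnti_nat_of_succ_lt hstep
  obtain ⟨σ, hfin, M, hM⟩ := hL
  -- quotients are determined by DFA states
  have hquot : ∀ z₁ z₂ : List α, M.eval z₁ = M.eval z₂ →
      leftQuot z₁ L = leftQuot z₂ L := by
    intro z₁ z₂ h
    ext v
    have h1 : ∀ z : List α, (z ++ v ∈ L ↔ M.evalFrom (M.eval z) v ∈ M.accept) := by
      intro z
      rw [← hM]
      show z ++ v ∈ M.accepts ↔ _
      rw [DFA.mem_accepts]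
      unfold DFA.eval
      rw [M.evalFrom_of_append]
    simp only [leftQuot, Set.mem_setOf_eq, h1, h]
  have hinj : Function.Injective (fun n => M.eval (zs n)) := by
    intro m n h
    exact hanti.injective (hquot _ _ h)
  haveI := hfin
  obtain ⟨m, n, hmn, heq⟩ :=
    Finite.exists_ne_map_eq_of_infinite (fun n => M.eval (zs n))
  exact hmn (hinj heq)
end

section
/- If Σ is a nonempty alphabet and L ⊆ Σ* is a finite language, then D(L) = suff(L). -/
variable {α : Type*}

theorem stmt_10 [Nonempty α] (L : Set (List α)) (hfin : L.Finite) :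
    dist L = suffixes L := by
  ext w
  constructor
  · rintro ⟨x, y, hx, _⟩; exact ⟨x, hx⟩
  · rintro ⟨u, hu⟩
    obtain ⟨a⟩ := ‹Nonempty α›
    obtain ⟨N, hN⟩ : ∃ N, ∀ v ∈ L, v.length ≤ N := by
      obtain ⟨N, hN⟩ := (hfin.image List.length).bddAbove
      exact ⟨N, fun v hv => hN ⟨v, hv, rfl⟩⟩
    refine ⟨u, List.replicate (N + 1) a, hu, fun h => ?_⟩
    have := hN _ h
    simp at this
    omega
end

section
/- Let L be a regular language over an alphabet Σ whose set of left quotients {w⁻¹L | w ∈ Σ*} has cardinality n with n ≥ 2. Then the set of left quotients of D(L) has cardinality at most 2^n − n; that is, sc(D(L)) ≤ 2^n − n. -/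
/-!
Writing `Q` for the set of left quotients of `L`, we have `D(L) = ⋃₀ Q \ ⋂₀ Q`, and taking the
left quotient by `w` commutes with unions, intersections and differences, so
`w⁻¹D(L) = ⋃₀ S \ ⋂₀ S` with `S = {w⁻¹M | M ∈ Q} ⊆ Q`. Hence every quotient of `D(L)` is a value
of `S ↦ ⋃₀ S \ ⋂₀ S` on one of the `2 ^ n` subsets of `Q`, and the `n + 1` subsets with at most
one element all give `∅`.
-/

variable {α : Type*}

theorem Set.ncard_image_le_ncard_sub_add_one {β γ : Type*} {f : β → γ} {s t : Set β}
    (hs : s.Finite) (hts : t ⊆ s) (hf : (f '' t).Subsingleton) :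
    (f '' s).ncard ≤ s.ncard - t.ncard + 1 := by
  have hsplit : f '' s ⊆ f '' (s \ t) ∪ f '' t := by
    rw [← Set.image_union, Set.sdiff_union_self]
    exact Set.image_mono Set.subset_union_left
  calc (f '' s).ncard ≤ (f '' (s \ t) ∪ f '' t).ncard :=
        Set.ncard_le_ncard hsplit ((hs.sdiff.image f).union ((hs.subset hts).image f))
    _ ≤ (f '' (s \ t)).ncard + (f '' t).ncard := Set.ncard_union_le _ _
    _ ≤ (s \ t).ncard + 1 :=
        add_le_add (Set.ncard_image_le hs.sdiff)
          ((Set.ncard_le_one hf.finite).mpr fun _ ha _ hb => hf ha hb)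
    _ = s.ncard - t.ncard + 1 := by rw [Set.ncard_sdiff' hts hs]

section UnionDiffInter

variable {β γ : Type*}

def unionDiffInter (S : Set (Set β)) : Set β := ⋃₀ S \ ⋂₀ S

theorem unionDiffInter_of_subsingleton {S : Set (Set β)} (hS : S.Subsingleton) :
    unionDiffInter S = ∅ := by
  rcases hS.eq_empty_or_singleton with rfl | ⟨M, rfl⟩ <;> simp [unionDiffInter]

theorem preimage_unionDiffInter (f : γ → β) (S : Set (Set β)) :
    f ⁻¹' unionDiffInter S = unionDiffInter ((f ⁻¹' ·) '' S) := by
  ext x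
  simp [unionDiffInter]

theorem ncard_image_unionDiffInter_powerset_le {Q : Set (Set β)} (hQ : Q.Finite) :
    (unionDiffInter '' 𝒫 Q).ncard ≤ 2 ^ Q.ncard - Q.ncard := by
  set small : Set (Set (Set β)) := insert ∅ (singleton '' Q)
  have hsmall : small ⊆ 𝒫 Q := by
    rintro S (rfl | ⟨M, hM, rfl⟩)
    · exact Set.empty_subset Q
    · exact Set.singleton_subset_iff.mpr hM
  have hsmall_card : small.ncard = Q.ncard + 1 := by
    rw [Set.ncard_insert_of_notMem (by simp) (hQ.image _),
      Set.ncard_image_of_injective _ Set.singleton_injective]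
  have hconst : (unionDiffInter '' small).Subsingleton := by
    rintro _ ⟨S, hS, rfl⟩ _ ⟨S', hS', rfl⟩
    have subsingleton_of_mem : ∀ S ∈ small, S.Subsingleton := by
      rintro S (rfl | ⟨M, -, rfl⟩)
      exacts [Set.subsingleton_empty, Set.subsingleton_singleton]
    rw [unionDiffInter_of_subsingleton (subsingleton_of_mem S hS),
      unionDiffInter_of_subsingleton (subsingleton_of_mem S' hS')]
  have hbound := Set.ncard_image_le_ncard_sub_add_one hQ.powerset hsmall hconst
  rw [Set.ncard_powerset Q hQ, hsmall_card] at hbound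
  have := Q.ncard.lt_two_pow_self
  omega

end UnionDiffInter

def quotients (L : Set (List α)) : Set (Set (List α)) := {M | ∃ w, M = leftQuot w L}

theorem quotients_eq_range_leftQuotient (L : Set (List α)) :
    quotients L = Set.range (Language.leftQuotient L) := by
  ext M
  exact exists_congr fun _ => eq_comm

theorem leftQuot_leftQuot (w u : List α) (L : Set (List α)) :
    leftQuot w (leftQuot u L) = leftQuot (u ++ w) L := by
  ext x
  simp [leftQuot, List.append_assoc]

theorem image_leftQuot_quotients_subset (w : List α) (L : Set (List α)) :
    leftQuot w '' quotients L ⊆ quotients L := by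
  rintro _ ⟨_, ⟨u, rfl⟩, rfl⟩
  exact ⟨u ++ w, leftQuot_leftQuot w u L⟩

theorem dist_eq_unionDiffInter_quotients (L : Set (List α)) :
    dist L = unionDiffInter (quotients L) := by
  ext w
  simp [_root_.dist, unionDiffInter, quotients, leftQuot]

theorem leftQuot_dist (w : List α) (L : Set (List α)) :
    leftQuot w (dist L) = unionDiffInter (leftQuot w '' quotients L) := by
  rw [dist_eq_unionDiffInter_quotients]
  exact preimage_unionDiffInter (w ++ ·) _

theorem quotients_dist_subset (L : Set (List α)) :
    quotients (dist L) ⊆ unionDiffInter '' 𝒫 quotients L := by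
  rintro _ ⟨w, rfl⟩
  exact ⟨_, image_leftQuot_quotients_subset w L, (leftQuot_dist w L).symm⟩

theorem stmt_11_general (L : Set (List α)) (hL : Language.IsRegular L) (n : ℕ)
    (hcard : {M : Set (List α) | ∃ w : List α, M = leftQuot w L}.ncard = n) :
    {M : Set (List α) | ∃ w : List α, M = leftQuot w (dist L)}.Finite ∧
      {M : Set (List α) | ∃ w : List α, M = leftQuot w (dist L)}.ncard ≤ 2 ^ n - n := by
  have hQ : (quotients L).Finite := by
    rw [quotients_eq_range_leftQuotient]
    exact hL.finite_range_leftQuotient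
  have hfin : (unionDiffInter '' 𝒫 quotients L).Finite := hQ.powerset.image _
  refine ⟨hfin.subset (quotients_dist_subset L), ?_⟩
  calc (quotients (dist L)).ncard
      ≤ (unionDiffInter '' 𝒫 quotients L).ncard :=
        Set.ncard_le_ncard (quotients_dist_subset L) hfin
    _ ≤ 2 ^ n - n := hcard ▸ ncard_image_unionDiffInter_powerset_le hQ

theorem stmt_11 (L : Set (List α)) (hL : Language.IsRegular L) (n : ℕ) (hn : 2 ≤ n)
    (hcard : {M : Set (List α) | ∃ w : List α, M = leftQuot w L}.ncard = n) :
    {M : Set (List α) | ∃ w : List α, M = leftQuot w (dist L)}.Finite ∧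
      {M : Set (List α) | ∃ w : List α, M = leftQuot w (dist L)}.ncard ≤ 2 ^ n - n :=
  stmt_11_general L hL n hcard
end

section
/- For every regular language L over a finite linearly ordered alphabet Σ, the set Dmin(L) of minimal distinguishing words is suffix closed: for all w ∈ Dmin(L) and all u, v ∈ Σ*, if w = u·v then v ∈ Dmin(L). -/
variable {α : Type*}

/-- Shortlex (quasi-lexicographical) order on words: compare first by length,
then lexicographically. -/
def ShortlexLE [LinearOrder α] (u v : List α) : Prop :=
  u.length < v.length ∨ (u.length = v.length ∧ (u = v ∨ List.Lex (· < ·) u v))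

/-- `w` is the shortlex-minimum of the set of words `S`. -/
def IsShortlexMin [LinearOrder α] (S : Set (List α)) (w : List α) : Prop :=
  w ∈ S ∧ ∀ v ∈ S, ShortlexLE w v

/-- The set of minimal words distinguishing pairs of distinct left quotients of `L`:
for each pair `x, y` with `x⁻¹L ≠ y⁻¹L`, the shortlex-minimum of the symmetric
difference `(x⁻¹L) Δ (y⁻¹L)`. -/
def Dmin [LinearOrder α] (L : Set (List α)) : Set (List α) :=
  {w | ∃ x y : List α, leftQuot x L ≠ leftQuot y L ∧
        IsShortlexMin (symmDiff (leftQuot x L) (leftQuot y L)) w}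

lemma lex_append_cancel [LinearOrder α] :
    ∀ (u v z : List α), List.Lex (· < ·) (u ++ v) (u ++ z) → List.Lex (· < ·) v z := by
  intro u
  induction u with
  | nil => intro v z h; exact h
  | cons a u ih =>
    intro v z h
    cases h with
    | cons h => exact ih v z h
    | rel h => exact absurd h (lt_irrefl a)

lemma shortlex_append_cancel [LinearOrder α] (u v z : List α)
    (h : ShortlexLE (u ++ v) (u ++ z)) : ShortlexLE v z := by
  rcases h with h | ⟨h1, h2⟩
  · left; simpa using h
  · right
    constructor
    · simpa using h1
    · rcases h2 with h2 | h2
      · exact Or.inl (List.append_cancel_left h2)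
      · exact Or.inr (lex_append_cancel u v z h2)

lemma mem_quot_append (x u : List α) (L : Set (List α)) (z : List α) :
    z ∈ leftQuot (x ++ u) L ↔ u ++ z ∈ leftQuot x L := by
  simp [leftQuot, List.append_assoc]

theorem stmt_12 [Fintype α] [LinearOrder α] (L : Set (List α))
    (hL : Language.IsRegular L) :
    ∀ w ∈ Dmin L, ∀ u v : List α, w = u ++ v → v ∈ Dmin L := by
  rintro w ⟨x, y, hne, hmem, hmin⟩ u v rfl
  have key : ∀ z : List α,
      z ∈ symmDiff (leftQuot (x ++ u) L) (leftQuot (y ++ u) L) ↔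
      u ++ z ∈ symmDiff (leftQuot x L) (leftQuot y L) := by
    intro z
    rw [Set.mem_symmDiff, Set.mem_symmDiff, mem_quot_append, mem_quot_append]
  have hv : v ∈ symmDiff (leftQuot (x ++ u) L) (leftQuot (y ++ u) L) :=
    (key v).mpr hmem
  refine ⟨x ++ u, y ++ u, ?_, hv, ?_⟩
  · intro heq
    rcases Set.mem_symmDiff.mp hv with ⟨h1, h2⟩ | ⟨h1, h2⟩
    · exact h2 (heq ▸ h1)
    · exact h2 (heq ▸ h1)
  · intro z hz
    exact shortlex_append_cancel u v z (hmin (u ++ z) ((key z).mp hz))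
end

section
/- If L is a regular language over a finite linearly ordered alphabet Σ whose set of left quotients has cardinality n with n ≥ 2, then the set Dmin(L) of minimal distinguishing words has at most n − 1 elements. -/
variable {α : Type*}

/-!
Order words by shortlex and, for a word `w`, count the left quotients of `L` up to agreement on
all words shortlex-below `w`. If `w` is the least word separating two quotients `M ≠ N`, then
`M` and `N` are identified at level `w` but separated at every later level, so this count is
strictly increasing on `Dmin L`; it is positive, and smaller than `n` because `M` and `N` are
identified. Hence `Dmin L` injects into `{1, …, n - 1}`. Only the linear order on words matters,
so the argument works for any finite family of subsets of a linearly ordered type.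
-/

open Set

namespace Set

variable {β γ : Type*} {f : β → γ} {s : Set β}

theorem ncard_image_lt_of_not_injOn (hs : s.Finite) (hf : ¬ InjOn f s) :
    (f '' s).ncard < s.ncard :=
  (ncard_image_le hs).lt_of_ne fun h => hf ((ncard_image_iff hs).1 h)

theorem notMem_of_mem_symmDiff_of_inter_eq {M N S : Set β} {w : β} (hw : w ∈ symmDiff M N)
    (h : M ∩ S = N ∩ S) : w ∉ S := fun hS => by
  have := congrArg (w ∈ ·) h
  simp only [mem_inter_iff, hS, and_true, eq_iff_iff] at this
  rw [mem_symmDiff] at hw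
  tauto

end Set

section MinSymmDiffs

variable {β : Type*} [LinearOrder β]

def minSymmDiffs (Q : Set (Set β)) : Set β :=
  {w | ∃ M ∈ Q, ∃ N ∈ Q, IsLeast (symmDiff M N) w}

noncomputable def truncCard (Q : Set (Set β)) (w : β) : ℕ :=
  ((· ∩ Iio w) '' Q).ncard

variable {Q : Set (Set β)}

theorem inter_Iio_eq_of_isLeast_symmDiff {M N : Set β} {w : β} (h : IsLeast (symmDiff M N) w) :
    M ∩ Iio w = N ∩ Iio w := by
  ext v
  simp only [mem_inter_iff, mem_Iio]
  by_cases hv : v < w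
  · have : v ∉ symmDiff M N := fun hvMN => (h.2 hvMN).not_gt hv
    rw [mem_symmDiff] at this
    tauto
  · tauto

theorem ne_of_isLeast_symmDiff {M N : Set β} {w : β} (h : IsLeast (symmDiff M N) w) : M ≠ N := by
  rintro rfl
  simpa using h.1

theorem truncCard_lt_ncard (hQ : Q.Finite) {w : β} (hw : w ∈ minSymmDiffs Q) :
    truncCard Q w < Q.ncard := by
  obtain ⟨M, hM, N, hN, hw⟩ := hw
  refine ncard_image_lt_of_not_injOn hQ fun hinj => ?_
  exact ne_of_isLeast_symmDiff hw (hinj hM hN (inter_Iio_eq_of_isLeast_symmDiff hw))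

theorem truncCard_pos (hQ : Q.Finite) {w : β} (hw : w ∈ minSymmDiffs Q) :
    0 < truncCard Q w := by
  obtain ⟨M, hM, -⟩ := hw
  exact (ncard_pos (hQ.image _)).2 ⟨_, mem_image_of_mem _ hM⟩

theorem truncCard_lt_of_lt (hQ : Q.Finite) {w₁ w₂ : β} (hw₁ : w₁ ∈ minSymmDiffs Q)
    (h : w₁ < w₂) : truncCard Q w₁ < truncCard Q w₂ := by
  obtain ⟨M, hM, N, hN, hw₁⟩ := hw₁
  have hcomp : ((· ∩ Iio w₁) ∘ (· ∩ Iio w₂) : Set β → Set β) = (· ∩ Iio w₁) :=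
    funext fun S => by rw [Function.comp_apply, inter_assoc, Iio_inter_Iio, min_eq_right h.le]
  unfold truncCard
  rw [← hcomp, image_comp]
  refine ncard_image_lt_of_not_injOn (hQ.image _) fun hinj => ?_
  have heq : M ∩ Iio w₂ = N ∩ Iio w₂ :=
    hinj (mem_image_of_mem _ hM) (mem_image_of_mem _ hN) <| (congrFun hcomp M).trans <|
      (inter_Iio_eq_of_isLeast_symmDiff hw₁).trans (congrFun hcomp N).symm
  exact notMem_of_mem_symmDiff_of_inter_eq hw₁.1 heq h

theorem strictMonoOn_truncCard (hQ : Q.Finite) : StrictMonoOn (truncCard Q) (minSymmDiffs Q) :=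
  fun _ hw₁ _ _ h => truncCard_lt_of_lt hQ hw₁ h

theorem mapsTo_truncCard (hQ : Q.Finite) :
    MapsTo (truncCard Q) (minSymmDiffs Q) (Ioo 0 Q.ncard) :=
  fun _ hw => ⟨truncCard_pos hQ hw, truncCard_lt_ncard hQ hw⟩

theorem minSymmDiffs_finite (hQ : Q.Finite) : (minSymmDiffs Q).Finite :=
  (finite_Ioo 0 Q.ncard).of_injOn (mapsTo_truncCard hQ) (strictMonoOn_truncCard hQ).injOn

theorem ncard_minSymmDiffs_le (hQ : Q.Finite) : (minSymmDiffs Q).ncard ≤ Q.ncard - 1 := by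
  have := ncard_le_ncard_of_injOn _ (mapsTo_truncCard hQ) (strictMonoOn_truncCard hQ).injOn
    (finite_Ioo 0 Q.ncard)
  simpa using this

end MinSymmDiffs

section Shortlex

variable [LinearOrder α]

def ShortlexWord (α : Type*) := List α

instance : LinearOrder (ShortlexWord α) :=
  LinearOrder.lift' (fun u : List α => toLex (u.length, u)) fun _ _ h => congrArg Prod.snd h

theorem shortlexLE_iff_le {u v : List α} :
    ShortlexLE u v ↔ @LE.le (ShortlexWord α) _ u v := by
  have hlt : u < v ↔ List.Lex (· < ·) u v := List.lt_iff_lex_lt u v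
  show _ ↔ toLex (u.length, u) ≤ toLex (v.length, v)
  rw [Prod.Lex.toLex_le_toLex, le_iff_lt_or_eq, hlt, ShortlexLE]
  tauto

theorem isShortlexMin_iff_isLeast {S : Set (List α)} {w : List α} :
    IsShortlexMin S w ↔ @IsLeast (ShortlexWord α) _ S w := by
  simp only [IsShortlexMin, IsLeast, lowerBounds, shortlexLE_iff_le]
  rfl

theorem Dmin_eq_minSymmDiffs (L : Set (List α)) :
    Dmin L = minSymmDiffs (β := ShortlexWord α) {M | ∃ w : List α, M = leftQuot w L} := by
  ext w
  simp only [Dmin, minSymmDiffs, isShortlexMin_iff_isLeast, mem_ofPred_eq]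
  constructor
  · rintro ⟨x, y, -, h⟩
    exact ⟨_, ⟨x, rfl⟩, _, ⟨y, rfl⟩, h⟩
  · rintro ⟨_, ⟨x, rfl⟩, _, ⟨y, rfl⟩, h⟩
    exact ⟨x, y, ne_of_isLeast_symmDiff (β := ShortlexWord α) h, h⟩

end Shortlex

theorem stmt_13_general [LinearOrder α] (L : Set (List α))
    (n : ℕ) (hn : 2 ≤ n)
    (hcard : {M : Set (List α) | ∃ w : List α, M = leftQuot w L}.ncard = n) :
    (Dmin L).Finite ∧ (Dmin L).ncard ≤ n - 1 := by
  have hfin : {M : Set (List α) | ∃ w : List α, M = leftQuot w L}.Finite :=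
    finite_of_ncard_ne_zero (by omega)
  rw [Dmin_eq_minSymmDiffs, ← hcard]
  exact ⟨minSymmDiffs_finite (β := ShortlexWord α) hfin,
    ncard_minSymmDiffs_le (β := ShortlexWord α) hfin⟩

theorem stmt_13 [Fintype α] [LinearOrder α] (L : Set (List α))
    (hL : Language.IsRegular L) (n : ℕ) (hn : 2 ≤ n)
    (hcard : {M : Set (List α) | ∃ w : List α, M = leftQuot w L}.ncard = n) :
    (Dmin L).Finite ∧ (Dmin L).ncard ≤ n - 1 :=
  stmt_13_general L n hn hcard
end

section
/- For every n ≥ 2 there exists a regular language L over a three-letter linearly ordered alphabet such that the set of left quotients of L has cardinality exactly n and the set Dmin(L) of minimal distinguishing words has exactly n − 1 elements; hence the bound n − 1 on |Dmin(L)| is tight. -/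
variable {α : Type*}

-- auxiliary lemmas

lemma shortlex_antisymm [LinearOrder α] {u v : List α}
    (h1 : ShortlexLE u v) (h2 : ShortlexLE v u) : u = v := by
  rcases h1 with h1 | ⟨hl1, h1⟩
  · rcases h2 with h2 | ⟨hl2, _⟩ <;> omega
  · rcases h1 with rfl | h1
    · rfl
    rcases h2 with h2 | ⟨_, h2⟩
    · omega
    rcases h2 with rfl | h2
    · rfl
    · exact absurd h2 (asymm h1)

lemma replicate_zero_min (k : ℕ) (v : List (Fin 3)) (hv : v.length = k) :
    v = List.replicate k (0 : Fin 3) ∨ List.Lex (· < ·) (List.replicate k (0 : Fin 3)) v := by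
  induction k generalizing v with
  | zero => left; simpa [List.length_eq_zero_iff] using hv
  | succ k ih =>
    match v with
    | a :: v' =>
      simp only [List.length_cons, Nat.succ_inj] at hv
      rcases eq_or_lt_of_le (Fin.zero_le a) with ha | ha
      · rcases ih v' hv with h | h
        · left; rw [List.replicate_succ, ← ha, h]
        · right; rw [List.replicate_succ, ← ha]; exact List.Lex.cons h
      · right; rw [List.replicate_succ]; exact List.Lex.rel ha

lemma replicate_zero_shortlex (k : ℕ) (v : List (Fin 3)) (hv : k ≤ v.length) :
    ShortlexLE (List.replicate k (0 : Fin 3)) v := by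
  rcases eq_or_lt_of_le hv with h | h
  · right
    refine ⟨by simp [h.symm], ?_⟩
    rcases replicate_zero_min k v h.symm with h | h
    · left; exact h.symm
    · right; exact h
  · left; simpa using h

theorem stmt_14 (n : ℕ) (hn : 2 ≤ n) :
    ∃ L : Set (List (Fin 3)), Language.IsRegular L ∧
      {M : Set (List (Fin 3)) | ∃ w : List (Fin 3), M = leftQuot w L}.ncard = n ∧
      (Dmin L).ncard = n - 1 := by
  set m := n - 2 with hm
  set L : Set (List (Fin 3)) := {w | w.length = m} with hL
  -- abstract quotient
  set f : ℕ → Set (List (Fin 3)) := fun k => {x | x.length = k ∧ k ≤ m} with hf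
  have hfk : ∀ k ≤ m, f k = {x | x.length = k} := by
    intro k hk; ext x; simp [hf, hk]
  have hftop : ∀ k, m < k → f k = ∅ := by
    intro k hk; ext x; simp [hf]; omega
  have hrep : ∀ k ≤ m, List.replicate k (0 : Fin 3) ∈ f k := by
    intro k hk; exact ⟨by simp, hk⟩
  have hfinj : ∀ a ≤ m + 1, ∀ b ≤ m + 1, f a = f b → a = b := by
    intro a ha b hb hab
    by_contra hne
    wlog h : a < b generalizing a b
    · exact this b hb a ha hab.symm (Ne.symm hne) (by omega)
    have h1 : List.replicate a (0 : Fin 3) ∈ f a := hrep a (by omega)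
    rw [hab] at h1
    have := h1.1
    simp at this
    omega
  -- quotient characterization
  have hquot : ∀ w : List (Fin 3), leftQuot w L =
      f (if w.length ≤ m then m - w.length else m + 1) := by
    intro w
    split
    · next h => ext x; simp [leftQuot, hL, hf]; omega
    · next h => ext x; simp [leftQuot, hL, hf]; omega
  refine ⟨L, ?_, ?_, ?_⟩
  · -- regularity
    refine ⟨Fin (m + 2), inferInstance,
      ⟨fun q _ => ⟨min (q.1 + 1) (m + 1), by omega⟩, ⟨0, by omega⟩, {q | q.1 = m}⟩, ?_⟩
    set M : DFA (Fin 3) (Fin (m + 2)) :=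
      ⟨fun q _ => ⟨min (q.1 + 1) (m + 1), by omega⟩, ⟨0, by omega⟩, {q | q.1 = m}⟩ with hM
    have key : ∀ (w : List (Fin 3)) (s : Fin (m + 2)),
        (M.evalFrom s w).1 = min (s.1 + w.length) (m + 1) := by
      intro w
      induction w with
      | nil => intro s; simp [DFA.evalFrom_nil]; omega
      | cons a w ih =>
        intro s
        have : M.evalFrom s (a :: w) = M.evalFrom (M.step s a) w := rfl
        rw [this, ih]
        simp [hM, M]
        omega
    ext w
    rw [DFA.mem_accepts]
    have := key w M.start
    simp only [DFA.eval]
    constructor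
    · intro h
      have h2 : (M.evalFrom M.start w).1 = m := h
      rw [this] at h2
      have : w.length = m := by
        have : M.start.1 = 0 := rfl
        omega
      exact this
    · intro h
      show (M.evalFrom M.start w).1 = m
      rw [this]
      have hs : M.start.1 = 0 := rfl
      have hw : w.length = m := h
      omega
  · -- number of quotients
    have hset : {M : Set (List (Fin 3)) | ∃ w : List (Fin 3), M = leftQuot w L} =
        f '' (Set.Iic (m + 1)) := by
      ext S
      constructor
      · rintro ⟨w, rfl⟩
        rw [hquot w]
        exact ⟨_, by split <;> simp <;> omega, rfl⟩
      · rintro ⟨k, hk, rfl⟩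
        simp only [Set.mem_Iic] at hk
        rcases Nat.lt_or_ge m k with h | h
        · refine ⟨List.replicate (m + 1) 0, ?_⟩
          rw [hquot]
          simp only [List.length_replicate]
          rw [if_neg (by omega), hftop k (by omega), hftop (m+1) (by omega)]
        · refine ⟨List.replicate (m - k) 0, ?_⟩
          rw [hquot]
          simp only [List.length_replicate]
          rw [if_pos (by omega)]
          have he : m - (m - k) = k := by omega
          rw [he]
    rw [hset, Set.ncard_image_of_injOn, ← Finset.coe_Iic, Set.ncard_coe_finset]
    · simp; omega
    · intro a ha b hb hab
      exact hfinj a ha b hb hab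
  · -- Dmin
    have hDmin : Dmin L = (fun k => List.replicate k (0 : Fin 3)) '' (Set.Iic m) := by
      ext w
      constructor
      · rintro ⟨x, y, hne, hmin⟩
        rw [hquot x, hquot y] at hne hmin
        set a := if x.length ≤ m then m - x.length else m + 1 with ha
        set b := if y.length ≤ m then m - y.length else m + 1 with hb
        have ham : a ≤ m + 1 := by rw [ha]; split <;> omega
        have hbm : b ≤ m + 1 := by rw [hb]; split <;> omega
        have hab : a ≠ b := fun h => hne (by rw [h])
        -- the min of symmDiff (f a) (f b) is replicate (min a b) 0
        have hminab : min a b ≤ m := by omega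
        have hmem : List.replicate (min a b) (0 : Fin 3) ∈ symmDiff (f a) (f b) := by
          rcases Nat.lt_or_ge a b with h | h
          · rw [min_eq_left h.le]
            exact Or.inl ⟨hrep a (by omega), fun hc => by have := hc.1; simp at this; omega⟩
          · have hba : b < a := by omega
            rw [min_eq_right hba.le]
            exact Or.inr ⟨hrep b (by omega), fun hc => by have := hc.1; simp at this; omega⟩
        have hle : ShortlexLE (List.replicate (min a b) (0 : Fin 3)) w := by
          have hwmem := hmin.1
          rcases hwmem with ⟨hw1, _⟩ | ⟨hw1, _⟩
          · exact replicate_zero_shortlex _ _ (by have := hw1.1; omega)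
          · exact replicate_zero_shortlex _ _ (by have := hw1.1; omega)
        have := shortlex_antisymm hle (hmin.2 _ hmem)
        exact ⟨min a b, hminab, this⟩
      · rintro ⟨k, hk, rfl⟩
        simp only [Set.mem_Iic] at hk
        refine ⟨List.replicate (m - k) 0, List.replicate (m + 1) 0, ?_, ?_⟩
        · rw [hquot, hquot]
          simp only [List.length_replicate]
          rw [if_pos (by omega), if_neg (by omega), hftop (m + 1) (by omega)]
          have hk' : m - (m - k) = k := by omega
          rw [hk']
          intro h
          have : List.replicate k (0 : Fin 3) ∈ f k := hrep k hk
          rw [h] at this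
          exact this
        · rw [hquot, hquot]
          simp only [List.length_replicate]
          rw [if_pos (by omega), if_neg (by omega), hftop (m + 1) (by omega)]
          have hk' : m - (m - k) = k := by omega
          rw [hk']
          have hbot : (∅ : Set (List (Fin 3))) = ⊥ := rfl
          rw [hbot, symmDiff_bot]
          constructor
          · exact hrep k hk
          · rintro v ⟨hv, _⟩
            exact replicate_zero_shortlex _ _ (by rw [hv])
    rw [hDmin, Set.ncard_image_of_injOn, ← Finset.coe_Iic, Set.ncard_coe_finset]
    · simp; omega
    · intro a _ b _ hab
      have := congrArg List.length hab
      simpa using this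
end

section
/- Let L be a regular language over a finite linearly ordered alphabet Σ whose set of left quotients has cardinality n with n ≥ 2. Then iterating the minimal-distinguishing-words operation reaches a fixed point within n − 1 steps: Dmin^n(L) = Dmin^{n−1}(L), where Dmin^k denotes the k-fold iteration of Dmin. -/
variable {α : Type*}

/-!
`Dmin L` is suffix-closed: dropping the first letter `a` of the minimal word distinguishing
`x⁻¹L` and `y⁻¹L` leaves the minimal word distinguishing `(xa)⁻¹L` and `(ya)⁻¹L`. A word of
`Dmin F` is a suffix of a word of `F`, so `Dmin F ⊆ F` for suffix-closed `F`, and the iterates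
`Dmin^[k] L`, `k ≥ 1`, form a decreasing chain. The chain never becomes empty, because a finite
nonempty language has two distinct quotients (by a long enough word, its quotient is empty).

The chain starts with at most `n - 1` words. For `w ∈ Dmin L` count the distinct restrictions of
the quotients of `L` to the words `≼ w`: this lies in `[2, n]`, and it strictly increases along
`Dmin L`, since `w` separates two quotients that agree on all words `≺ w`. Hence after at most
`n - 2` proper shrinkings the chain is stationary.
-/

def shortlexKey (u : List α) : ℕ ×ₗ List α := toLex (u.length, u)

theorem shortlexKey_injective : Function.Injective (shortlexKey (α := α)) :=
  fun _ _ h => congrArg Prod.snd (toLex.injective h)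

section Shortlex

variable [LinearOrder α]

theorem shortlexLE_iff {u v : List α} : ShortlexLE u v ↔ shortlexKey u ≤ shortlexKey v := by
  rw [shortlexKey, shortlexKey, Prod.Lex.toLex_le_toLex, le_iff_eq_or_lt]
  rfl

theorem ShortlexLE.of_cons {a : α} {u v : List α} (h : ShortlexLE (a :: u) (a :: v)) :
    ShortlexLE u v := by
  simpa [ShortlexLE, List.lex_cons_iff] using h

theorem exists_isShortlexMin [Finite α] {S : Set (List α)} (hS : S.Nonempty) :
    ∃ w, IsShortlexMin S w := by
  have hwf : WellFounded fun u v : List α => shortlexKey u < shortlexKey v := by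
    convert List.Shortlex.wf (wellFounded_lt (α := α)) using 3
    simp [shortlexKey, Prod.Lex.lt_iff, List.shortlex_def]
  obtain ⟨w, hw, hmin⟩ := hwf.has_min S hS
  exact ⟨w, hw, fun v hv => shortlexLE_iff.2 (not_lt.1 (hmin v hv))⟩

end Shortlex

def SuffixClosed (F : Set (List α)) : Prop := ∀ u w, u ++ w ∈ F → w ∈ F

theorem mem_leftQuot_append_singleton {x v : List α} {a : α} {L : Set (List α)} :
    v ∈ leftQuot (x ++ [a]) L ↔ a :: v ∈ leftQuot x L := by
  simp [leftQuot]

theorem exists_leftQuot_ne_of_finite [Nonempty α] {F : Set (List α)} (hF : F.Finite)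
    (hne : F.Nonempty) : ∃ x y : List α, leftQuot x F ≠ leftQuot y F := by
  obtain ⟨N, hN⟩ := (hF.image List.length).bddAbove
  obtain ⟨u, hu⟩ := hne
  obtain ⟨a⟩ := ‹Nonempty α›
  refine ⟨[], List.replicate (N + 1) a, fun h => ?_⟩
  have hlong : u ∈ leftQuot (List.replicate (N + 1) a) F := h ▸ hu
  have := hN ⟨_, hlong, rfl⟩
  simp only [List.length_append, List.length_replicate] at this
  omega

section Dmin

variable [LinearOrder α]

theorem mem_Dmin_of_cons_mem {L : Set (List α)} {a : α} {w : List α} (h : a :: w ∈ Dmin L) :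
    w ∈ Dmin L := by
  obtain ⟨x, y, -, hmem, hmin⟩ := h
  have hshift : ∀ v, v ∈ symmDiff (leftQuot (x ++ [a]) L) (leftQuot (y ++ [a]) L) ↔
      a :: v ∈ symmDiff (leftQuot x L) (leftQuot y L) := fun v => by
    simp only [Set.mem_symmDiff, mem_leftQuot_append_singleton]
  refine ⟨x ++ [a], y ++ [a], fun h => ?_, (hshift w).2 hmem,
    fun v hv => (hmin _ ((hshift v).1 hv)).of_cons⟩
  simpa [h] using (hshift w).2 hmem

theorem suffixClosed_Dmin (L : Set (List α)) : SuffixClosed (Dmin L) := by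
  intro u w h
  induction u with
  | nil => exact h
  | cons a u ih => exact ih (mem_Dmin_of_cons_mem h)

theorem SuffixClosed.Dmin_subset {F : Set (List α)} (hF : SuffixClosed F) : Dmin F ⊆ F := by
  rintro w ⟨x, y, -, hmem | hmem, -⟩
  · exact hF x w hmem.1
  · exact hF y w hmem.1

theorem Dmin_nonempty_of_leftQuot_ne [Finite α] {L : Set (List α)} {x y : List α}
    (h : leftQuot x L ≠ leftQuot y L) : (Dmin L).Nonempty := by
  obtain ⟨w, hw⟩ := exists_isShortlexMin (Set.symmDiff_nonempty.2 h)
  exact ⟨w, x, y, h, hw⟩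

end Dmin

theorem Set.inter_eq_inter_iff_disjoint_symmDiff {β : Type*} {P Q S : Set β} :
    P ∩ S = Q ∩ S ↔ Disjoint (symmDiff P Q) S := by
  rw [Set.disjoint_iff_inter_eq_empty, Set.inter_symmDiff_distrib_right, ← Set.bot_eq_empty,
    symmDiff_eq_bot]

def leftQuots (L : Set (List α)) : Set (Set (List α)) := {M | ∃ w, M = leftQuot w L}

section Truncation

variable [LinearOrder α] {L : Set (List α)}

def truncatedLeftQuots (L : Set (List α)) (w : List α) : Set (Set (List α)) :=
  (· ∩ {v | ShortlexLE v w}) '' leftQuots L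

theorem exists_leftQuots_first_differ_at_of_mem_Dmin {w : List α} (hw : w ∈ Dmin L) :
    ∃ x y, leftQuot x L ∩ {v | ShortlexLE v w} ≠ leftQuot y L ∩ {v | ShortlexLE v w} ∧
      ∀ w', shortlexKey w' < shortlexKey w →
        leftQuot x L ∩ {v | ShortlexLE v w'} = leftQuot y L ∩ {v | ShortlexLE v w'} := by
  obtain ⟨x, y, -, hmem, hmin⟩ := hw
  refine ⟨x, y, fun h => ?_, fun w' hw' => ?_⟩
  · exact Set.inter_eq_inter_iff_disjoint_symmDiff.1 h |>.notMem_of_mem_left hmem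
      (shortlexLE_iff.2 le_rfl)
  · refine Set.inter_eq_inter_iff_disjoint_symmDiff.2 (Set.disjoint_left.2 fun v hv hvw' => ?_)
    exact (shortlexLE_iff.1 (hmin v hv)).trans (shortlexLE_iff.1 hvw') |>.not_gt hw'

theorem ncard_truncatedLeftQuots_le (hL : (leftQuots L).Finite) (w : List α) :
    (truncatedLeftQuots L w).ncard ≤ (leftQuots L).ncard :=
  Set.ncard_image_le hL

theorem two_le_ncard_truncatedLeftQuots (hL : (leftQuots L).Finite) {w : List α}
    (hw : w ∈ Dmin L) : 2 ≤ (truncatedLeftQuots L w).ncard := by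
  obtain ⟨x, y, hne, -⟩ := exists_leftQuots_first_differ_at_of_mem_Dmin hw
  exact (Set.one_lt_ncard_iff (hL.image _)).2 ⟨_, _, ⟨_, ⟨x, rfl⟩, rfl⟩, ⟨_, ⟨y, rfl⟩, rfl⟩, hne⟩

theorem ncard_truncatedLeftQuots_lt (hL : (leftQuots L).Finite) {w w' : List α}
    (hw' : w' ∈ Dmin L) (hlt : shortlexKey w < shortlexKey w') :
    (truncatedLeftQuots L w).ncard < (truncatedLeftQuots L w').ncard := by
  obtain ⟨x, y, hne, heq⟩ := exists_leftQuots_first_differ_at_of_mem_Dmin hw'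
  have hsub : {v | ShortlexLE v w} ⊆ {v | ShortlexLE v w'} := fun v hv =>
    shortlexLE_iff.2 ((shortlexLE_iff.1 hv).trans hlt.le)
  have hrestrict : truncatedLeftQuots L w =
      (· ∩ {v | ShortlexLE v w}) '' truncatedLeftQuots L w' := by
    simp only [truncatedLeftQuots, Set.image_image, Set.inter_assoc,
      Set.inter_eq_right.2 hsub]
  have hfin : (truncatedLeftQuots L w').Finite := hL.image _
  rw [hrestrict]
  refine (Set.ncard_image_le hfin).lt_of_ne fun hcard => hne ?_
  refine (Set.ncard_image_iff hfin).1 hcard ⟨_, ⟨x, rfl⟩, rfl⟩ ⟨_, ⟨y, rfl⟩, rfl⟩ ?_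
  simpa only [Set.inter_assoc, Set.inter_eq_right.2 hsub] using heq w hlt

theorem injOn_ncard_truncatedLeftQuots (hL : (leftQuots L).Finite) :
    Set.InjOn (fun w => (truncatedLeftQuots L w).ncard) (Dmin L) := by
  intro w hw w' hw' h
  by_contra hne
  rcases lt_or_gt_of_ne (shortlexKey_injective.ne hne) with hlt | hlt
  · exact (ncard_truncatedLeftQuots_lt hL hw' hlt).ne h
  · exact (ncard_truncatedLeftQuots_lt hL hw hlt).ne' h

theorem mapsTo_ncard_truncatedLeftQuots (hL : (leftQuots L).Finite) :
    Set.MapsTo (fun w => (truncatedLeftQuots L w).ncard) (Dmin L)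
      (Set.Icc 2 (leftQuots L).ncard) :=
  fun _ hw => ⟨two_le_ncard_truncatedLeftQuots hL hw, ncard_truncatedLeftQuots_le hL _⟩

theorem finite_Dmin (hL : (leftQuots L).Finite) : (Dmin L).Finite :=
  Set.Finite.of_injOn (mapsTo_ncard_truncatedLeftQuots hL) (injOn_ncard_truncatedLeftQuots hL)
    (Set.finite_Icc _ _)

theorem ncard_Dmin_le (hL : (leftQuots L).Finite) :
    (Dmin L).ncard ≤ (leftQuots L).ncard - 1 := by
  have := Set.ncard_le_ncard_of_injOn _ (mapsTo_ncard_truncatedLeftQuots hL)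
    (injOn_ncard_truncatedLeftQuots hL) (Set.finite_Icc _ _)
  rwa [Set.ncard_Icc_nat, Nat.add_sub_add_right] at this

end Truncation

theorem Set.iterate_succ_eq_of_ncard_le {β : Type*} {g : Set β → Set β} {s : Set β}
    (hs : s.Finite) (hsub : ∀ k, g^[k + 1] s ⊆ g^[k] s) {m : ℕ}
    (hne : (g^[m + 1] s).Nonempty) (hm : s.ncard ≤ m + 1) : g^[m + 1] s = g^[m] s := by
  have hfin : ∀ k, (g^[k] s).Finite := by
    intro k
    induction k with
    | zero => exact hs
    | succ k ih => exact ih.subset (hsub k)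
  have hshrink : ∀ k, g^[k + 1] s = g^[k] s ∨ (g^[k + 1] s).ncard + (k + 1) ≤ s.ncard := by
    intro k
    induction k with
    | zero =>
      refine (hsub 0).eq_or_ssubset.imp_right fun h => ?_
      exact Set.ncard_lt_ncard h hs
    | succ k ih =>
      refine (hsub (k + 1)).eq_or_ssubset.imp_right fun h => ?_
      rcases ih with hfix | hcard
      · exact absurd ((Function.iterate_succ_apply' g (k + 1) s).trans
          ((congrArg g hfix).trans (Function.iterate_succ_apply' g k s).symm)) h.ne
      · have := Set.ncard_lt_ncard h (hfin _)
        omega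
  refine (hshrink m).resolve_right fun hcard => ?_
  have := (Set.ncard_pos (hfin (m + 1))).2 hne
  omega

section Iterates

variable [LinearOrder α]

theorem Dmin_nonempty_of_finite [Finite α] [Nonempty α] {F : Set (List α)} (hF : F.Finite)
    (hne : F.Nonempty) : (Dmin F).Nonempty :=
  have ⟨_, _, h⟩ := exists_leftQuot_ne_of_finite hF hne
  Dmin_nonempty_of_leftQuot_ne h

theorem Dmin_iterate_succ_succ_subset (L : Set (List α)) (k : ℕ) :
    Dmin^[k + 2] L ⊆ Dmin^[k + 1] L := by
  rw [Function.iterate_succ_apply', Function.iterate_succ_apply']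
  exact (suffixClosed_Dmin _).Dmin_subset

theorem Dmin_iterate_succ_subset (L : Set (List α)) (k : ℕ) : Dmin^[k + 1] L ⊆ Dmin L := by
  induction k with
  | zero => rfl
  | succ k ih => exact (Dmin_iterate_succ_succ_subset L k).trans ih

theorem Dmin_iterate_succ_nonempty [Finite α] [Nonempty α] {L : Set (List α)}
    (hfin : (Dmin L).Finite) (hne : (Dmin L).Nonempty) (k : ℕ) : (Dmin^[k + 1] L).Nonempty := by
  induction k with
  | zero => exact hne
  | succ k ih =>
    rw [Function.iterate_succ_apply']
    exact Dmin_nonempty_of_finite (hfin.subset (Dmin_iterate_succ_subset L k)) ih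

end Iterates

theorem stmt_15_general [Fintype α] [LinearOrder α] (L : Set (List α))
    (n : ℕ) (hn : 2 ≤ n)
    (hcard : {M : Set (List α) | ∃ w : List α, M = leftQuot w L}.ncard = n) :
    Dmin^[n] L = Dmin^[n - 1] L := by
  change (leftQuots L).ncard = n at hcard
  have hfin : (leftQuots L).Finite := Set.finite_of_ncard_pos (by omega)
  obtain ⟨_, _, ⟨x, rfl⟩, ⟨y, rfl⟩, hxy⟩ := (Set.one_lt_ncard_iff hfin).1 (by omega)
  have : Nonempty α := by
    cases x with
    | cons a _ => exact ⟨a⟩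
    | nil => cases y with
      | cons a _ => exact ⟨a⟩
      | nil => exact absurd rfl hxy
  obtain ⟨m, rfl⟩ : ∃ m, n = m + 2 := ⟨n - 2, by omega⟩
  have hDfin := finite_Dmin hfin
  exact Set.iterate_succ_eq_of_ncard_le hDfin (Dmin_iterate_succ_succ_subset L)
    (Dmin_iterate_succ_nonempty hDfin (Dmin_nonempty_of_leftQuot_ne hxy) (m + 1))
    (by have := ncard_Dmin_le hfin; omega)

theorem stmt_15 [Fintype α] [LinearOrder α] (L : Set (List α))
    (hL : Language.IsRegular L) (n : ℕ) (hn : 2 ≤ n)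
    (hcard : {M : Set (List α) | ∃ w : List α, M = leftQuot w L}.ncard = n) :
    Dmin^[n] L = Dmin^[n - 1] L :=
  stmt_15_general L n hn hcard
end

section
/- Let L be a regular language over an alphabet Σ with L ≠ Σ*. Then F(L) = L if and only if L is infix closed, where F(L) = infix(L) ∩ infix(Lᶜ) is the two-sided distinguishability language of L. -/
variable {α : Type*}

/-- The set of all factors (infixes) of words of `L`. -/
def infixes (L : Set (List α)) : Set (List α) := {v | ∃ u w : List α, u ++ v ++ w ∈ L}

/-- The two-sided distinguishability language `F(L)`. -/
def tsdist (L : Set (List α)) : Set (List α) :=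
  {v | ∃ x y x2 y2 : List α, x ++ v ++ y ∈ L ∧ x2 ++ v ++ y2 ∉ L}

theorem stmt_18 (L : Set (List α)) (hL : Language.IsRegular L) (hne : L ≠ Set.univ) :
    tsdist L = L ↔ ∀ u v w : List α, u ++ v ++ w ∈ L → v ∈ L := by
  obtain ⟨z, hz⟩ : ∃ z, z ∉ L := by
    by_contra h
    push_neg at h
    exact hne (Set.eq_univ_of_forall h)
  constructor
  · intro hF u v w huvw
    by_cases hall : ∀ x2 y2 : List α, x2 ++ v ++ y2 ∈ L
    · simpa using hall [] []
    · push_neg at hall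
      obtain ⟨x2, y2, hx2⟩ := hall
      rw [← hF]
      exact ⟨u, w, x2, y2, huvw, hx2⟩
  · intro hic
    ext v
    constructor
    · rintro ⟨x, y, x2, y2, h1, _⟩
      exact hic x v y h1
    · intro hv
      refine ⟨[], [], z, [], by simpa using hv, fun h => hz ?_⟩
      exact hic [] z (v ++ []) (by simpa [List.append_assoc] using h)
end

section
/- Let L be a regular language over an alphabet Σ. If F(L) ≠ Σ*, then F(F(L)) = F(L), where F is the two-sided distinguishability operation. -/
variable {α : Type*}

theorem stmt_19 (L : Set (List α)) (hL : Language.IsRegular L)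
    (hne : tsdist L ≠ Set.univ) :
    tsdist (tsdist L) = tsdist L := by
  ext v
  constructor
  · rintro ⟨x, y, x2, y2, hin, -⟩
    obtain ⟨a, b, a2, b2, h1, h2⟩ := hin
    exact ⟨a ++ x, y ++ b, a2 ++ x, y ++ b2, by simpa [List.append_assoc] using h1,
      by simpa [List.append_assoc] using h2⟩
  · intro hv
    obtain ⟨z, hz⟩ : ∃ z, z ∉ tsdist L := by
      by_contra h
      push_neg at h
      exact hne (Set.eq_univ_of_forall h)
    simp only [tsdist, Set.mem_setOf_eq, not_exists, not_and, not_not] at hz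
    refine ⟨[], [], [], z, by simpa using hv, ?_⟩
    rintro ⟨x, y, x2, y2, h1, h2⟩
    exact h2 (by
      have := hz (x ++ v) y (x2 ++ v) y2 (by simpa [List.append_assoc] using h1)
      simpa [List.append_assoc] using this)
end
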